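/- arXiv:2501.00784 — 2 statements merged into one kernel-verified Lean document; each statement's English description precedes it below -/
import Mathlib

section
/- The density of 1's in the sequence (b_n)_{n≥1} is 2/3: the sequence (g_n/n)_{n≥1} converges to 2/3 as n → ∞. -/
/-- `e` enumerates the ending positions of the runs of the sequence `s`
(whose terms are `s 1, s 2, s 3, …`; the value `s 0` is irrelevant).
A run is a maximal block of consecutive identical values; the `n`'th run
(`n ≥ 1`) occupies positions `e (n-1) + 1, …, e n`. -/
def IsRunEnds {α : Type*} (s : ℕ → α) (e : ℕ → ℕ) : Prop :=
  e 0 = 0 ∧ StrictMono e ∧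
    (∀ n, 1 ≤ n → ∀ i, e (n - 1) < i → i ≤ e n → s i = s (e n)) ∧
    (∀ n, 1 ≤ n → s (e n) ≠ s (e n + 1))

/-- The regular paperfolding sequence over `{0,1}`: `q 0 = 0`,
`q (2n) = q n` for `n ≥ 1`, `q (4n+1) = 0` and `q (4n+3) = 1` for `n ≥ 0`. -/
def IsRegularPaperfolding (q : ℕ → ℕ) : Prop :=
  (∀ n, q n = 0 ∨ q n = 1) ∧ q 0 = 0 ∧
    (∀ n, 1 ≤ n → q (2 * n) = q n) ∧
    (∀ n, q (4 * n + 1) = 0) ∧ (∀ n, q (4 * n + 3) = 1)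

/-- The first difference sequence `d` of `q`: `d 1 = 1` and
`d n = q n - q (n-1)` for `n ≥ 2`. (The value at `0` is irrelevant.) -/
def dseq (q : ℕ → ℕ) (n : ℕ) : ℤ :=
  if n = 1 then 1 else (q n : ℤ) - (q (n - 1) : ℤ)

/-- `d' n = |d n|`, as a natural number. -/
def dabs (q : ℕ → ℕ) (n : ℕ) : ℕ := (dseq q n).natAbs


open Finset Filter

section Aux

/-- count of positions `1 ≤ i ≤ m` where `s i ≠ s (i+1)` (run boundaries). -/
def cntB (s : ℕ → ℕ) (m : ℕ) : ℕ := ((Finset.Icc 1 m).filter fun i => s i ≠ s (i+1)).card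

/-- count of positions `1 ≤ i ≤ m` where `s i = 1`. -/
def cntS (s : ℕ → ℕ) (m : ℕ) : ℕ := ((Finset.Icc 1 m).filter fun i => s i = 1).card

lemma filter_Icc_succ (p : ℕ → Prop) [DecidablePred p] (m : ℕ) :
    ((Finset.Icc 1 (m+1)).filter p).card
      = ((Finset.Icc 1 m).filter p).card + (if p (m+1) then 1 else 0) := by
  rw [show Finset.Icc 1 (m+1) = insert (m+1) (Finset.Icc 1 m) by
      ext i; simp [Finset.mem_Icc]; omega, Finset.filter_insert]
  split
  · rw [Finset.card_insert_of_notMem (by simp)]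
  · simp

lemma cntB_mono (s : ℕ → ℕ) {m m' : ℕ} (h : m ≤ m') : cntB s m ≤ cntB s m' :=
  Finset.card_le_card (Finset.filter_subset_filter _ (Finset.Icc_subset_Icc_right h))

lemma cntS_mono (s : ℕ → ℕ) {m m' : ℕ} (h : m ≤ m') : cntS s m ≤ cntS s m' :=
  Finset.card_le_card (Finset.filter_subset_filter _ (Finset.Icc_subset_Icc_right h))

variable {q : ℕ → ℕ}

lemma qodd (hq : IsRegularPaperfolding q) (k : ℕ) : q (2*k+1) = k % 2 := by
  obtain ⟨h01, h0, hd, h1, h3⟩ := hq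
  rcases Nat.even_or_odd k with ⟨n, hn⟩ | ⟨n, hn⟩
  · subst hn
    have := h1 n
    have e : 2*(n+n)+1 = 4*n+1 := by ring
    rw [e, this]; omega
  · subst hn
    have := h3 n
    have e : 2*(2*n+1)+1 = 4*n+3 := by ring
    rw [e, this]; omega

lemma s_one : dabs q 1 = 1 := by simp [dabs, dseq]

lemma s_two (hq : IsRegularPaperfolding q) : dabs q 2 = 0 := by
  obtain ⟨h01, h0, hd, h1, h3⟩ := hq
  have e2 : q 2 = q 1 := by have := hd 1 le_rfl; simpa using this
  have e1 : q 1 = 0 := by have := h1 0; simpa using this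
  simp [dabs, dseq, e2, e1]

lemma s_pair (hq : IsRegularPaperfolding q) {k : ℕ} (hk : 1 ≤ k) :
    (dabs q (2*k) = 1 ∧ dabs q (2*k+1) = 0) ∨ (dabs q (2*k) = 0 ∧ dabs q (2*k+1) = 1) := by
  obtain ⟨h01, h0, hd, h1, h3⟩ := hq
  have e1 : q (2*k) = q k := hd k hk
  have e2 : q (2*k+1) = k % 2 := qodd ⟨h01, h0, hd, h1, h3⟩ k
  have e3 : q (2*k-1) = (k-1) % 2 := by
    have h := qodd (q := q) ⟨h01, h0, hd, h1, h3⟩ (k-1)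
    rwa [show 2*(k-1)+1 = 2*k-1 by omega] at h
  unfold dabs dseq
  rw [if_neg (by omega), if_neg (by omega)]
  rw [show 2*k+1-1 = 2*k by omega]
  rw [e1, e2, e3]
  rcases h01 k with h | h <;> omega

lemma s_odd_boundary (hq : IsRegularPaperfolding q) {k : ℕ} (hk : 1 ≤ k) :
    (dabs q (2*k+1) ≠ dabs q (2*k+2)) ↔ dabs q (k+1) = 1 := by
  obtain ⟨h01, h0, hd, h1, h3⟩ := hq
  have e1 : q (2*k) = q k := hd k hk
  have e2 : q (2*k+1) = k % 2 := qodd ⟨h01, h0, hd, h1, h3⟩ k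
  have e3 : q (2*k+2) = q (k+1) := by
    have := hd (k+1) (by omega); rwa [show 2*(k+1) = 2*k+2 by omega] at this
  unfold dabs dseq
  rw [if_neg (by omega), if_neg (by omega), if_neg (by omega)]
  rw [show 2*k+1-1 = 2*k by omega, show 2*k+2-1 = 2*k+1 by omega, show k+1-1 = k by omega]
  rw [e1, e2, e3]
  rcases h01 k with h | h <;> rcases h01 (k+1) with h' | h' <;> omega

lemma cntS_odd (hq : IsRegularPaperfolding q) (m : ℕ) : cntS (dabs q) (2*m+1) = m + 1 := by
  induction m with
  | zero =>
    simp [cntS, Finset.Icc_self, Finset.filter_singleton, s_one]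
  | succ m ih =>
    have e1 : cntS (dabs q) (2*m+2)
        = cntS (dabs q) (2*m+1) + (if dabs q (2*m+2) = 1 then 1 else 0) :=
      filter_Icc_succ _ _
    have e2 : cntS (dabs q) (2*m+3)
        = cntS (dabs q) (2*m+2) + (if dabs q (2*m+3) = 1 then 1 else 0) :=
      filter_Icc_succ _ _
    have hp := s_pair (q := q) hq (k := m+1) (by omega)
    rw [show 2*(m+1) = 2*m+2 by ring, show 2*m+2+1 = 2*m+3 by ring] at hp
    rw [show 2*(m+1)+1 = 2*m+3 by ring]
    rcases hp with ⟨ha, hb⟩ | ⟨ha, hb⟩ <;> rw [e2, e1, ha, hb] <;> simp [ih]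

lemma cntB_odd (hq : IsRegularPaperfolding q) (M : ℕ) : cntB (dabs q) (2*M+1) = M + cntS (dabs q) (M+1) := by
  induction M with
  | zero =>
    have h1 : dabs q 1 = 1 := s_one
    have h2 : dabs q 2 = 0 := s_two hq
    simp [cntB, cntS, Finset.Icc_self, Finset.filter_singleton, h1, h2]
  | succ M ih =>
    have e1 : cntB (dabs q) (2*M+2)
        = cntB (dabs q) (2*M+1) + (if dabs q (2*M+2) ≠ dabs q (2*M+3) then 1 else 0) :=
      filter_Icc_succ _ _
    have e2 : cntB (dabs q) (2*M+3)
        = cntB (dabs q) (2*M+2) + (if dabs q (2*M+3) ≠ dabs q (2*M+4) then 1 else 0) :=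
      filter_Icc_succ _ _
    have eS : cntS (dabs q) (M+2)
        = cntS (dabs q) (M+1) + (if dabs q (M+2) = 1 then 1 else 0) :=
      filter_Icc_succ _ _
    have hp := s_pair (q := q) hq (k := M+1) (by omega)
    rw [show 2*(M+1) = 2*M+2 by ring, show 2*M+2+1 = 2*M+3 by ring] at hp
    have hob := s_odd_boundary (q := q) hq (k := M+1) (by omega)
    rw [show 2*(M+1)+1 = 2*M+3 by ring, show 2*(M+1)+2 = 2*M+4 by ring] at hob
    have hbnd : dabs q (2*M+2) ≠ dabs q (2*M+3) := by rcases hp with ⟨ha, hb⟩|⟨ha, hb⟩ <;> omega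
    rw [show 2*(M+1)+1 = 2*M+3 by ring, e2, e1, eS, if_pos hbnd, ih]
    by_cases hc : dabs q (M+2) = 1
    · rw [if_pos hc, if_pos (hob.mpr hc)]; ring
    · rw [if_neg hc, if_neg (by intro hcon; exact hc (hob.mp hcon))]; ring

lemma cntS_bound (hq : IsRegularPaperfolding q) {m : ℕ} (hm : 1 ≤ m) :
    m ≤ 2 * cntS (dabs q) m ∧ 2 * cntS (dabs q) m ≤ m + 2 := by
  have low : cntS (dabs q) (2*((m-1)/2)+1) ≤ cntS (dabs q) m := cntS_mono _ (by omega)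
  have high : cntS (dabs q) m ≤ cntS (dabs q) (2*(m/2)+1) := cntS_mono _ (by omega)
  rw [cntS_odd hq] at low
  rw [cntS_odd hq] at high
  omega

lemma cntB_bound (hq : IsRegularPaperfolding q) {m : ℕ} (hm : 1 ≤ m) :
    3*m ≤ 4 * cntB (dabs q) m + 4 ∧ 4 * cntB (dabs q) m ≤ 3*m + 6 := by
  have low : cntB (dabs q) (2*((m-1)/2)+1) ≤ cntB (dabs q) m := cntB_mono _ (by omega)
  have high : cntB (dabs q) m ≤ cntB (dabs q) (2*(m/2)+1) := cntB_mono _ (by omega)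
  rw [cntB_odd hq] at low
  rw [cntB_odd hq] at high
  have hSA := cntS_bound (q := q) hq (m := (m-1)/2 + 1) (by omega)
  have hSB := cntS_bound (q := q) hq (m := m/2 + 1) (by omega)
  omega

end Aux
/-- the density of 1's in `(b_n)_{n≥1}` is `2/3`:
`g n / n → 2/3` as `n → ∞`, where `g n` counts indices `1 ≤ i ≤ n`
with `b i = 1`. -/
theorem cloitre_density_of_ones
    (q : ℕ → ℕ) (hq : IsRegularPaperfolding q)
    (e : ℕ → ℕ) (he : IsRunEnds (dabs q) e)
    (b : ℕ → ℕ) (hb : ∀ n, 1 ≤ n → b n = e n - e (n - 1))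
    (g : ℕ → ℕ) (hg : ∀ n, g n = ((Finset.Icc 1 n).filter fun i => b i = 1).card) :
    Filter.Tendsto (fun n : ℕ => (g n : ℝ) / n) Filter.atTop (nhds (2 / 3)) := by
  obtain ⟨he0, hemono, hconst, hne⟩ := he
  -- cntB (dabs q) (e n) = n
  have hBe : ∀ n, cntB (dabs q) (e n) = n := by
    intro n
    induction n with
    | zero => simp [cntB, he0]
    | succ n ih =>
      have hlt : e n < e (n+1) := hemono (Nat.lt_succ_self n)
      have hsplit : Finset.Icc 1 (e (n+1))
          = Finset.Icc 1 (e n) ∪ Finset.Ioc (e n) (e (n+1)) := by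
        rw [show (1:ℕ) = 0 + 1 from rfl, Finset.Icc_add_one_left_eq_Ioc, Finset.Icc_add_one_left_eq_Ioc,
          Finset.Ioc_union_Ioc_eq_Ioc (Nat.zero_le _) (le_of_lt hlt)]
      have hdisj : Disjoint ((Finset.Icc 1 (e n)).filter fun i => dabs q i ≠ dabs q (i+1))
          ((Finset.Ioc (e n) (e (n+1))).filter fun i => dabs q i ≠ dabs q (i+1)) := by
        apply Finset.disjoint_filter_filter
        exact Finset.disjoint_left.2 fun i hi hj => by
          simp only [Finset.mem_Icc] at hi
          simp only [Finset.mem_Ioc] at hj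
          omega
      have hsing : ((Finset.Ioc (e n) (e (n+1))).filter fun i => dabs q i ≠ dabs q (i+1))
          = {e (n+1)} := by
        ext i
        simp only [Finset.mem_filter, Finset.mem_Ioc, Finset.mem_singleton]
        constructor
        · rintro ⟨⟨h1, h2⟩, h3⟩
          by_contra hcon
          have hi1 : dabs q i = dabs q (e (n+1)) :=
            hconst (n+1) (by omega) i (by simpa using h1) h2
          have hi2 : dabs q (i+1) = dabs q (e (n+1)) :=
            hconst (n+1) (by omega) (i+1) (by simpa using by omega : e n < i + 1) (by omega)
          exact h3 (hi1.trans hi2.symm)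
        · rintro rfl
          exact ⟨⟨hlt, le_rfl⟩, hne (n+1) (by omega)⟩
      unfold cntB
      rw [hsplit, Finset.filter_union, Finset.card_union_of_disjoint hdisj, hsing,
        Finset.card_singleton]
      unfold cntB at ih
      omega
  -- run lengths are 1 or 2
  have hblem : ∀ n, 1 ≤ n → e n = e (n-1) + 1 ∨ e n = e (n-1) + 2 := by
    intro n hn
    have hlt : e (n-1) < e n := hemono (by omega)
    by_contra hcon
    push_neg at hcon
    have h3 : e (n-1) + 3 ≤ e n := by omega
    set k := e (n-1) / 2 + 1 with hk
    have hj1 : e (n-1) < 2*k := by omega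
    have hj2 : 2*k + 1 ≤ e n := by omega
    have h1 : dabs q (2*k) = dabs q (e n) := hconst n hn (2*k) hj1 (by omega)
    have h2 : dabs q (2*k+1) = dabs q (e n) := hconst n hn (2*k+1) (by omega) hj2
    rcases s_pair (q := q) hq (k := k) (by omega) with ⟨ha, hb'⟩ | ⟨ha, hb'⟩ <;> omega
  -- e n + g n = 2 * n
  have hsum : ∀ n, e n + g n = 2 * n := by
    intro n
    induction n with
    | zero => simp [hg, he0]
    | succ n ih =>
      have hgstep : g (n+1) = g n + (if b (n+1) = 1 then 1 else 0) := by
        rw [hg, hg]; exact filter_Icc_succ _ _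
      have hbn : b (n+1) = e (n+1) - e n := by
        have := hb (n+1) (by omega); simpa using this
      have hlt : e n < e (n+1) := hemono (Nat.lt_succ_self n)
      rcases hblem (n+1) (by omega) with h | h <;> simp only [Nat.add_sub_cancel] at h
      · have hb1 : b (n+1) = 1 := by omega
        rw [hgstep, hb1, if_pos rfl]; omega
      · have hb2 : b (n+1) = 2 := by omega
        rw [hgstep, hb2]; norm_num; omega
  -- key bound : 2n ≤ 3 g n + 4 and 3 g n ≤ 2 n + 6
  have hkey : ∀ n, 1 ≤ n → 2*n ≤ 3 * g n + 4 ∧ 3 * g n ≤ 2*n + 6 := by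
    intro n hn
    have hen : 1 ≤ e n := by
      have : n ≤ e n := hemono.le_apply
      omega
    have hB := cntB_bound (q := q) hq (m := e n) hen
    rw [hBe n] at hB
    have := hsum n
    omega
  -- the analytic conclusion
  have habs : ∀ n, 1 ≤ n → ‖(g n : ℝ) / n - 2/3‖ ≤ 3 / n := by
    intro n hn
    have hn0 : (0:ℝ) < n := by exact_mod_cast hn
    have hn' : (n:ℝ) ≠ 0 := ne_of_gt hn0
    have hk := hkey n hn
    have c1 : (2*n : ℝ) ≤ 3 * g n + 4 := by exact_mod_cast hk.1
    have c2 : (3 * g n : ℝ) ≤ 2*n + 6 := by exact_mod_cast hk.2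
    have heq : (g n : ℝ) / n - 2/3 = (3*(g n:ℝ) - 2*n) / (3*n) := by
      field_simp
    rw [Real.norm_eq_abs, heq, abs_div, abs_of_pos (by positivity : (0:ℝ) < 3*n)]
    have hnum : |3*(g n:ℝ) - 2*n| ≤ 9 := by
      rw [abs_le]; constructor <;> linarith
    calc |3*(g n:ℝ) - 2*n| / (3*n) ≤ 9 / (3*n) := by gcongr
      _ = 3 / n := by field_simp; ring
  have hlim : Filter.Tendsto (fun n : ℕ => (3:ℝ) / n) Filter.atTop (nhds 0) :=
    tendsto_const_div_atTop_nhds_zero_nat 3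
  have hev : ∀ᶠ n in Filter.atTop, ‖(g n : ℝ) / n - 2/3‖ ≤ 3 / n :=
    Filter.eventually_atTop.2 ⟨1, habs⟩
  exact tendsto_sub_nhds_zero_iff.mp (squeeze_zero_norm' hev hlim)
end

section
/- For every n ≥ 1, the n'th run of the sequence (b_k)_{k≥1} consists of 1's if n is odd and of 2's if n is even; consequently the sum σ_n of the entries of the n'th run of (b_k) equals r_n when n is odd and 2·r_n when n is even, where r_n is the length of the n'th run of (b_k)_{k≥1}. -/
lemma q_odd (q : ℕ → ℕ) (hq : IsRegularPaperfolding q) (k : ℕ) : q (2*k+1) = k % 2 := by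
  obtain ⟨_, _, _, h1, h3⟩ := hq
  rcases Nat.even_or_odd k with ⟨m, hm⟩ | ⟨m, hm⟩
  · have e : 2*k+1 = 4*m+1 := by omega
    rw [e, h1 m]; omega
  · have e : 2*k+1 = 4*m+3 := by omega
    rw [e, h3 m]; omega

lemma dabs_pair (q : ℕ → ℕ) (hq : IsRegularPaperfolding q) (k : ℕ) (hk : 1 ≤ k) :
    dabs q (2*k) ≠ dabs q (2*k+1) := by
  have ha : q (2*k-1) = (k-1) % 2 := by
    have := q_odd q hq (k-1)
    rw [show 2*(k-1)+1 = 2*k-1 by omega] at this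
    exact this
  have hb := q_odd q hq k
  have hc := hq.1 (2*k)
  unfold dabs dseq
  rw [if_neg (by omega), if_neg (by omega)]
  rw [show 2*k+1-1 = 2*k by omega, ha, hb]
  rcases hc with h | h <;> rw [h] <;> omega

lemma dabs_one (q : ℕ → ℕ) : dabs q 1 = 1 := by simp [dabs, dseq]

lemma dabs_two (q : ℕ → ℕ) (hq : IsRegularPaperfolding q) : dabs q 2 = 0 := by
  obtain ⟨_, h0, h2n, h1, _⟩ := hq
  have hq1 : q 1 = 0 := by simpa using h1 0
  have hq2 : q 2 = 0 := by
    have := h2n 1 le_rfl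
    rw [show 2*1 = 2 by rfl] at this
    rw [this, hq1]
  simp [dabs, dseq, hq1, hq2]

lemma no_three (q : ℕ → ℕ) (hq : IsRegularPaperfolding q) (i : ℕ) (hi : 1 ≤ i) :
    dabs q i ≠ dabs q (i+1) ∨ dabs q (i+1) ≠ dabs q (i+2) := by
  rcases eq_or_lt_of_le hi with h1 | h2
  · left; rw [← h1, dabs_one, show (1:ℕ)+1 = 2 by rfl, dabs_two q hq]; omega
  · rcases Nat.even_or_odd i with ⟨k, hk⟩ | ⟨k, hk⟩
    · left
      rw [show i = 2*k by omega, show 2*k+1 = 2*k+1 from rfl]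
      exact dabs_pair q hq k (by omega)
    · right
      rw [show i+1 = 2*(k+1) by omega, show i+2 = 2*(k+1)+1 by omega]
      exact dabs_pair q hq (k+1) (by omega)
/-- for every `n ≥ 1`, the `n`'th run of `(b_k)_{k≥1}` consists
of 1's if `n` is odd and of 2's if `n` is even; consequently the sum `σ n` of
the entries of the `n`'th run equals the run length `r n = e2 n - e2 (n-1)`
when `n` is odd, and `2 * r n` when `n` is even. -/
theorem cloitre_runs_of_b_alternate
    (q : ℕ → ℕ) (hq : IsRegularPaperfolding q)
    (e : ℕ → ℕ) (he : IsRunEnds (dabs q) e)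
    (b : ℕ → ℕ) (hb : ∀ n, 1 ≤ n → b n = e n - e (n - 1))
    (e2 : ℕ → ℕ) (he2 : IsRunEnds b e2) :
    ∀ n, 1 ≤ n →
      (Odd n → (∀ i ∈ Finset.Icc (e2 (n - 1) + 1) (e2 n), b i = 1) ∧
        (∑ i ∈ Finset.Icc (e2 (n - 1) + 1) (e2 n), b i) = e2 n - e2 (n - 1)) ∧
      (Even n → (∀ i ∈ Finset.Icc (e2 (n - 1) + 1) (e2 n), b i = 2) ∧
        (∑ i ∈ Finset.Icc (e2 (n - 1) + 1) (e2 n), b i) = 2 * (e2 n - e2 (n - 1))) := by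
  obtain ⟨he0, hm, hrun, hne⟩ := he
  obtain ⟨he20, hm2, hrun2, hne2⟩ := he2
  -- every b n (n ≥ 1) is 1 or 2
  have hbval : ∀ n, 1 ≤ n → b n = 1 ∨ b n = 2 := by
    intro n hn
    have hb' := hb n hn
    have hlt : e (n-1) < e n := hm (by omega)
    by_contra hcon
    push_neg at hcon
    have h3 : e (n-1) + 3 ≤ e n := by omega
    have h1 : dabs q (e (n-1) + 1) = dabs q (e n) := hrun n hn _ (by omega) (by omega)
    have h2 : dabs q (e (n-1) + 2) = dabs q (e n) := hrun n hn _ (by omega) (by omega)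
    have h3' : dabs q (e (n-1) + 3) = dabs q (e n) := hrun n hn _ (by omega) (by omega)
    rcases no_three q hq (e (n-1) + 1) (by omega) with h | h
    · exact h (by rw [h1, show e (n-1)+1+1 = e (n-1)+2 by omega, h2])
    · exact h (by rw [show e (n-1)+1+1 = e (n-1)+2 by omega,
        show e (n-1)+1+2 = e (n-1)+3 by omega, h2, h3'])
  -- b 1 = 1
  have hb1 : b 1 = 1 := by
    have h1 : 1 ≤ e 1 := by have := hm (show (0:ℕ) < 1 by omega); omega
    have he1 : e 1 = 1 := by
      by_contra hcon
      have h2 : 2 ≤ e 1 := by omega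
      have ha : dabs q 1 = dabs q (e 1) := hrun 1 le_rfl 1 (by rw [show (1:ℕ)-1 = 0 from rfl, he0]; omega) h1
      have hbb : dabs q 2 = dabs q (e 1) := hrun 1 le_rfl 2 (by rw [show (1:ℕ)-1 = 0 from rfl, he0]; omega) h2
      rw [dabs_one] at ha; rw [dabs_two q hq] at hbb; omega
    rw [hb 1 le_rfl, show (1:ℕ)-1 = 0 from rfl, he0, he1]
  -- the value of the n'th run of b alternates, starting at 1
  have halt0 : ∀ m : ℕ, b (e2 (m+1)) = if (m+1) % 2 = 1 then 1 else 2 := by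
    intro m
    induction m with
    | zero =>
      have h1le : 1 ≤ e2 1 := by have := hm2 (show (0:ℕ) < 1 by omega); omega
      have h := hrun2 1 le_rfl 1 (by rw [show (1:ℕ)-1 = 0 from rfl, he20]; omega) h1le
      rw [show (0:ℕ)+1 = 1 from rfl, if_pos (show 1 % 2 = 1 from rfl), ← h, hb1]
    | succ k ih =>
      have hne' : b (e2 (k+1)) ≠ b (e2 (k+1) + 1) := hne2 (k+1) (by omega)
      have heq : b (e2 (k+1) + 1) = b (e2 (k+1+1)) := by
        refine hrun2 (k+1+1) (by omega) _ ?_ ?_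
        · show e2 (k+1+1-1) < e2 (k+1) + 1
          rw [show k+1+1-1 = k+1 by omega]; omega
        · have := hm2 (show k+1 < k+1+1 by omega); omega
      rw [heq] at hne'
      have hv : b (e2 (k+1+1)) = 1 ∨ b (e2 (k+1+1)) = 2 := by
        refine hbval _ ?_
        have h1 : e2 1 ≤ e2 (k+1+1) := hm2.monotone (by omega)
        have h2 : 0 < e2 1 := by have := hm2 (show (0:ℕ) < 1 by omega); omega
        omega
      by_cases hp : (k+1) % 2 = 1
      · rw [if_pos hp] at ih; rw [if_neg (by omega)]; omega
      · rw [if_neg hp] at ih; rw [if_pos (by omega)]; omega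
  have halt : ∀ n, 1 ≤ n → b (e2 n) = if n % 2 = 1 then 1 else 2 := by
    intro n hn
    obtain ⟨m, rfl⟩ : ∃ m, n = m+1 := ⟨n-1, by omega⟩
    exact halt0 m
  -- assemble
  intro n hn
  have hlt : e2 (n-1) < e2 n := hm2 (by omega)
  have hcard : (Finset.Icc (e2 (n-1) + 1) (e2 n)).card = e2 n - e2 (n-1) := by
    rw [Nat.card_Icc]; omega
  have hall : ∀ i ∈ Finset.Icc (e2 (n-1) + 1) (e2 n), b i = b (e2 n) := by
    intro i hi
    rw [Finset.mem_Icc] at hi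
    exact hrun2 n hn i (by omega) hi.2
  constructor
  · intro hodd
    have hmod : n % 2 = 1 := Nat.odd_iff.mp hodd
    have hval : b (e2 n) = 1 := by rw [halt n hn, if_pos hmod]
    have hall1 : ∀ i ∈ Finset.Icc (e2 (n-1) + 1) (e2 n), b i = 1 :=
      fun i hi => (hall i hi).trans hval
    refine ⟨hall1, ?_⟩
    rw [Finset.sum_congr rfl hall1, Finset.sum_const, hcard, smul_eq_mul, mul_one]
  · intro heven
    have hmod : n % 2 = 0 := Nat.even_iff.mp heven
    have hval : b (e2 n) = 2 := by rw [halt n hn, if_neg (by omega)]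
    have hall2 : ∀ i ∈ Finset.Icc (e2 (n-1) + 1) (e2 n), b i = 2 :=
      fun i hi => (hall i hi).trans hval
    refine ⟨hall2, ?_⟩
    rw [Finset.sum_congr rfl hall2, Finset.sum_const, hcard, smul_eq_mul, mul_comm]
end
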